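/- arXiv:2504.17633 — 2 statements merged into one kernel-verified Lean document; each statement's English description precedes it below -/
import Mathlib

section
/- Suppose that e⁺ ≺ e⁻ (strictly) for every e ∈ E and that there is a positive integer q with |sup_r(I)| = q for every ideal I of P*. Then the relation ≤ on 𝒮 is a partial order under which 𝒮 forms a distributive lattice: every two elements of 𝒮 have a least upper bound and a greatest lower bound in 𝒮, and meet distributes over join. -/
/-!
The bijection order on subsets of `E` is antisymmetric because a permutation of a finite set
moving every element weakly up in a partial order is the identity: every point is periodic.
Since all the sets `sup_r I` have the same size, `sup_r` is monotone: adding a minimal new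
element `x` to an ideal trades the elements with `e⁻ = x` for equally many elements with
`e⁺ = x`, and any matching between them goes up. Conversely `sup_r I ≤ sup_r K` forces
`sup_r (I ∪ K) = sup_r K` and `sup_r (I ∩ K) = sup_r I`: one inclusion holds and the sizes
agree. Hence `sup_r (I ∪ J)` and `sup_r (I ∩ J)` are the join and the meet, and distributivity
is inherited from the lattice of ideals.
-/

/-- An ideal (downward closed subset) of the poset `P*` obtained from `P` by removing
its minimum element `⊥` and maximum element `⊤`. -/
def IsIdealStar {P : Type*} [PartialOrder P] [OrderBot P] [OrderTop P] (I : Set P) : Prop :=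
  (∀ x ∈ I, x ≠ ⊥ ∧ x ≠ ⊤) ∧ ∀ u v : P, v ∈ I → u ≤ v → u ≠ ⊥ → u ∈ I

/-- `sup_r(I) := { e ∈ E : e⁺ ∈ I ∪ {⊥} and e⁻ ∉ I ∪ {⊥} }` where `r e = (e⁺, e⁻)`. -/
def supGen {P E : Type*} [PartialOrder P] [OrderBot P] [OrderTop P]
    (r : E → P × P) (I : Set P) : Set E :=
  {e | (r e).1 ∈ I ∪ {(⊥ : P)} ∧ (r e).2 ∉ I ∪ {(⊥ : P)}}

/-- The partial order on `E`: `e ≤ e'` iff `e = e'` or `e⁻ ⪯ e'⁺`. -/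
def elemLE {P E : Type*} [PartialOrder P] (r : E → P × P) (e e' : E) : Prop :=
  e = e' ∨ (r e).2 ≤ (r e').1

/-- `S ≤ T` iff there is a bijection `π : S → T` with `e ≤ π(e)` for all `e ∈ S`. -/
def setLE {P E : Type*} [PartialOrder P] (r : E → P × P) (S T : Set E) : Prop :=
  ∃ π : E → E, Set.BijOn π S T ∧ ∀ e ∈ S, elemLE r e (π e)

/-- `J` is a least upper bound of `S` and `T` within the family `𝒮`, w.r.t. `setLE`. -/
def IsJoinIn {P E : Type*} [PartialOrder P] (r : E → P × P) (𝒮 : Set (Set E))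
    (S T J : Set E) : Prop :=
  J ∈ 𝒮 ∧ setLE r S J ∧ setLE r T J ∧
    ∀ W ∈ 𝒮, setLE r S W → setLE r T W → setLE r J W

/-- `M` is a greatest lower bound of `S` and `T` within the family `𝒮`, w.r.t. `setLE`. -/
def IsMeetIn {P E : Type*} [PartialOrder P] (r : E → P × P) (𝒮 : Set (Set E))
    (S T M : Set E) : Prop :=
  M ∈ 𝒮 ∧ setLE r M S ∧ setLE r M T ∧
    ∀ W ∈ 𝒮, setLE r W S → setLE r W T → setLE r W M

theorem Set.BijOn.eq_of_forall_rel_apply {α : Type*} {R : α → α → Prop} [IsTrans α R]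
    [Std.Antisymm R] {s : Set α} (hs : s.Finite) {f : α → α} (hf : Set.BijOn f s s)
    (h : ∀ a ∈ s, R a (f a)) : ∀ a ∈ s, f a = a := by
  have chain : ∀ m, ∀ b ∈ s, R b (f^[m + 1] b) := by
    intro m
    induction m with
    | zero => exact h
    | succ m ih =>
      intro b hb
      rw [Function.iterate_succ_apply]
      exact trans_of R (h b hb) (ih (f b) (hf.mapsTo hb))
  intro a ha
  have : Finite s := hs
  obtain ⟨n, hn, hper⟩ :=
    ((hf.mapsTo.restrict_inj).2 hf.injOn).mem_periodicPts (⟨a, ha⟩ : s)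
  have hper : f^[n] a = a := by
    simpa [Function.IsPeriodicPt, Function.IsFixedPt, hf.mapsTo.iterate_restrict,
      Subtype.ext_iff] using hper
  obtain _ | _ | k := n
  · omega
  · exact hper
  · refine (antisymm (h a ha) ?_).symm
    simpa [← Function.iterate_succ_apply, hper] using chain k (f a) (hf.mapsTo ha)

section SetLE

variable {P E : Type*} [PartialOrder P] {r : E → P × P}

theorem elemLE_refl (r : E → P × P) (e : E) : elemLE r e e := Or.inl rfl

theorem elemLE_trans (hr : ∀ e, (r e).1 ≤ (r e).2) {e f g : E} (hef : elemLE r e f)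
    (hfg : elemLE r f g) : elemLE r e g := by
  rcases hef with rfl | hef
  · exact hfg
  rcases hfg with rfl | hfg
  · exact Or.inr hef
  · exact Or.inr (hef.trans ((hr f).trans hfg))

theorem elemLE_antisymm (hr : ∀ e, (r e).1 < (r e).2) {e f : E} (hef : elemLE r e f)
    (hfe : elemLE r f e) : e = f := by
  rcases hef with rfl | hef
  · rfl
  rcases hfe with rfl | hfe
  · rfl
  exact absurd (((hr e).trans_le hef).trans ((hr f).trans_le hfe)) (lt_irrefl _)

theorem elemLE.fst_le (hr : ∀ e, (r e).1 ≤ (r e).2) {e f : E} (h : elemLE r e f) :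
    (r e).1 ≤ (r f).1 :=
  h.elim (fun h => h ▸ le_rfl) ((hr e).trans ·)

theorem elemLE.snd_le (hr : ∀ e, (r e).1 ≤ (r e).2) {e f : E} (h : elemLE r e f) :
    (r e).2 ≤ (r f).2 :=
  h.elim (fun h => h ▸ le_rfl) (·.trans (hr f))

theorem setLE_refl (r : E → P × P) (S : Set E) : setLE r S S :=
  ⟨id, Set.bijOn_id S, fun e _ => elemLE_refl r e⟩

theorem setLE_trans (hr : ∀ e, (r e).1 ≤ (r e).2) {S T U : Set E} (hST : setLE r S T)
    (hTU : setLE r T U) : setLE r S U := by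
  obtain ⟨π, hπ, hπle⟩ := hST
  obtain ⟨σ, hσ, hσle⟩ := hTU
  exact ⟨σ ∘ π, hσ.comp hπ, fun e he => elemLE_trans hr (hπle e he) (hσle _ (hπ.mapsTo he))⟩

theorem subset_of_setLE_of_setLE [Finite E] (hr : ∀ e, (r e).1 < (r e).2) {S T : Set E}
    (hST : setLE r S T) (hTS : setLE r T S) : S ⊆ T := by
  have : IsTrans E (elemLE r) := ⟨fun _ _ _ => elemLE_trans fun e => (hr e).le⟩
  have : Std.Antisymm (elemLE r) := ⟨fun _ _ => elemLE_antisymm hr⟩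
  obtain ⟨π, hπ, hπle⟩ := hST
  obtain ⟨σ, hσ, hσle⟩ := hTS
  have hσπ : ∀ e ∈ S, σ (π e) = e :=
    (hσ.comp hπ).eq_of_forall_rel_apply (Set.toFinite S)
      fun e he => trans_of (elemLE r) (hπle e he) (hσle _ (hπ.mapsTo he))
  intro e he
  have hπe := hσle _ (hπ.mapsTo he)
  rw [hσπ e he] at hπe
  exact elemLE_antisymm hr (hπle e he) hπe ▸ hπ.mapsTo he

theorem setLE_antisymm [Finite E] (hr : ∀ e, (r e).1 < (r e).2) {S T : Set E}
    (hST : setLE r S T) (hTS : setLE r T S) : S = T :=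
  (subset_of_setLE_of_setLE hr hST hTS).antisymm (subset_of_setLE_of_setLE hr hTS hST)

theorem setLE_of_ncard_eq [Finite E] {A B : Set E} (hAB : A.ncard = B.ncard)
    (h : ∀ a ∈ A \ B, ∀ b ∈ B \ A, (r a).2 ≤ (r b).1) : setLE r A B := by
  classical
  rcases isEmpty_or_nonempty E with hE | hE
  · rw [Subsingleton.elim A B]
    exact setLE_refl r B
  obtain ⟨σ, hσ⟩ : ∃ σ : E → E, Set.BijOn σ (A \ B) (B \ A) := by
    refine (Set.toFinite _).exists_bijOn_of_encard_eq ?_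
    rw [← (Set.toFinite _).cast_ncard_eq, ← (Set.toFinite _).cast_ncard_eq,
      (Set.ncard_eq_ncard_iff_ncard_sdiff_eq_ncard_sdiff).mp hAB]
  set π := (A \ B).piecewise σ id
  have hπ_sdiff : Set.BijOn π (A \ B) (B \ A) := hσ.congr (Set.piecewise_eqOn _ _ _).symm
  have hπ_inter : Set.BijOn π (A ∩ B) (A ∩ B) :=
    (Set.bijOn_id _).congr fun e he => (Set.piecewise_eq_of_notMem _ _ _ fun h => h.2 he.2).symm
  have hπ_inj : Set.InjOn π (A \ B ∪ A ∩ B) := by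
    refine (Set.injOn_union Set.disjoint_sdiff_inter).2 ⟨hπ_sdiff.injOn, hπ_inter.injOn, ?_⟩
    intro a ha b hb hab
    exact (hπ_sdiff.mapsTo ha).2 (hab ▸ (hπ_inter.mapsTo hb).1)
  refine ⟨π, ?_, fun e he => ?_⟩
  · have hB : B \ A ∪ A ∩ B = B := by rw [Set.inter_comm, Set.sdiff_union_inter]
    simpa only [Set.sdiff_union_inter, hB] using hπ_sdiff.union hπ_inter hπ_inj
  · by_cases hd : e ∈ A \ B
    · exact Or.inr (h e hd (π e) (hπ_sdiff.mapsTo hd))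
    · exact Or.inl (Set.piecewise_eq_of_notMem (A \ B) σ id hd).symm

theorem IsJoinIn.unique [Finite E] {𝒮 : Set (Set E)} {S T : Set E}
    (hr : ∀ e, (r e).1 < (r e).2) {J J' : Set E} (h : IsJoinIn r 𝒮 S T J)
    (h' : IsJoinIn r 𝒮 S T J') : J = J' :=
  setLE_antisymm hr (h.2.2.2 J' h'.1 h'.2.1 h'.2.2.1) (h'.2.2.2 J h.1 h.2.1 h.2.2.1)

theorem IsMeetIn.unique [Finite E] {𝒮 : Set (Set E)} {S T : Set E}
    (hr : ∀ e, (r e).1 < (r e).2) {M M' : Set E} (h : IsMeetIn r 𝒮 S T M)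
    (h' : IsMeetIn r 𝒮 S T M') : M = M' :=
  setLE_antisymm hr (h'.2.2.2 M h.1 h.2.1 h.2.2.1) (h.2.2.2 M' h'.1 h'.2.1 h'.2.2.1)

end SetLE

namespace IsIdealStar

variable {P : Type*} [PartialOrder P] [OrderBot P] [OrderTop P] {I J : Set P}

theorem union (hI : IsIdealStar I) (hJ : IsIdealStar J) : IsIdealStar (I ∪ J) :=
  ⟨fun x hx => hx.elim (hI.1 x) (hJ.1 x), fun u v hv huv hu =>
    hv.imp (hI.2 u v · huv hu) (hJ.2 u v · huv hu)⟩

theorem inter (hI : IsIdealStar I) (hJ : IsIdealStar J) : IsIdealStar (I ∩ J) :=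
  ⟨fun x hx => hI.1 x hx.1, fun u v hv huv hu => ⟨hI.2 u v hv.1 huv hu, hJ.2 u v hv.2 huv hu⟩⟩

theorem insert (hI : IsIdealStar I) {x : P} (hx_bot : x ≠ ⊥) (hx_top : x ≠ ⊤)
    (hlt : ∀ u < x, u ≠ ⊥ → u ∈ I) : IsIdealStar (insert x I) := by
  refine ⟨?_, ?_⟩
  · rintro y (rfl | hy)
    exacts [⟨hx_bot, hx_top⟩, hI.1 y hy]
  · rintro u v (rfl | hv) huv hu
    · exact huv.eq_or_lt.imp id (hlt u · hu)
    · exact Or.inr (hI.2 u v hv huv hu)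

theorem mem_union_bot_of_le (hI : IsIdealStar I) {x y : P} (hxy : x ≤ y) (hy : y ∈ I ∪ {⊥}) :
    x ∈ I ∪ {⊥} := by
  by_cases hx : x = ⊥
  · exact Or.inr hx
  rcases hy with hy | rfl
  · exact Or.inl (hI.2 x y hy hxy hx)
  · exact Or.inr (le_bot_iff.mp hxy)

end IsIdealStar

section SupGen

variable {P E : Type*} [PartialOrder P] [OrderBot P] [OrderTop P] {r : E → P × P} {q : ℕ}

theorem setLE_supGen_insert [Finite E] (hcard : ∀ I, IsIdealStar I → (supGen r I).ncard = q)
    {I : Set P} {x : P} (hI : IsIdealStar I) (hIx : IsIdealStar (insert x I)) :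
    setLE r (supGen r I) (supGen r (insert x I)) := by
  refine setLE_of_ncard_eq (by rw [hcard _ hI, hcard _ hIx]) ?_
  rintro a ⟨⟨ha₁, ha₂⟩, ha⟩ b ⟨⟨hb₁, hb₂⟩, hb⟩
  simp only [supGen, Set.mem_ofPred_eq, Set.mem_union, Set.mem_insert_iff,
    Set.mem_singleton_iff] at ha₁ ha₂ ha hb₁ hb₂ hb
  have ha_snd : (r a).2 = x := by tauto
  have hb_fst : (r b).1 = x := by tauto
  exact (ha_snd.trans hb_fst.symm).le

theorem setLE_supGen_of_subset [Finite P] [Finite E] (hr : ∀ e, (r e).1 ≤ (r e).2)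
    (hcard : ∀ I, IsIdealStar I → (supGen r I).ncard = q) {I J : Set P}
    (hI : IsIdealStar I) (hJ : IsIdealStar J) (hIJ : I ⊆ J) :
    setLE r (supGen r I) (supGen r J) := by
  induction hn : (J \ I).ncard generalizing I with
  | zero =>
    rw [Set.ncard_eq_zero, Set.sdiff_eq_empty] at hn
    rw [hIJ.antisymm hn]
    exact setLE_refl r _
  | succ n ih =>
    obtain ⟨x, hx⟩ := exists_minimal_of_wellFoundedLT (· ∈ J \ I)
      (Set.nonempty_of_ncard_ne_zero (by omega))
    have hxJ : x ∈ J := hx.prop.1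
    have hIx : IsIdealStar (insert x I) :=
      hI.insert (hJ.1 x hxJ).1 (hJ.1 x hxJ).2 fun u hux hu =>
        by_contra fun huI => hx.not_lt ⟨hJ.2 u x hxJ hux.le hu, huI⟩ hux
    refine setLE_trans hr (setLE_supGen_insert hcard hI hIx)
      (ih hIx (Set.insert_subset hxJ hIJ) ?_)
    rw [Set.insert_eq, Set.union_comm, ← Set.sdiff_sdiff, Set.ncard_sdiff_singleton_of_mem hx.prop,
      hn, Nat.add_sub_cancel]

theorem supGen_union_eq_of_setLE [Finite E] (hr : ∀ e, (r e).1 ≤ (r e).2)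
    (hcard : ∀ I, IsIdealStar I → (supGen r I).ncard = q) {I K : Set P}
    (hI : IsIdealStar I) (hK : IsIdealStar K) (h : setLE r (supGen r I) (supGen r K)) :
    supGen r (I ∪ K) = supGen r K := by
  obtain ⟨π, hπ, hπle⟩ := h
  refine (Set.eq_of_subset_of_ncard_le ?_ (by rw [hcard _ (hI.union hK), hcard _ hK])).symm
  intro f hf
  obtain ⟨e, he, rfl⟩ := hπ.surjOn hf
  obtain ⟨hf₁, hf₂⟩ := hf
  refine ⟨by simp only [Set.mem_union] at hf₁ ⊢; tauto, fun hf₂' => he.2 ?_⟩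
  have hπe_snd : (r (π e)).2 ∈ I ∪ {⊥} := by simp only [Set.mem_union] at hf₂ hf₂' ⊢; tauto
  exact hI.mem_union_bot_of_le ((hπle e he).snd_le hr) hπe_snd

theorem supGen_inter_eq_of_setLE [Finite E] (hr : ∀ e, (r e).1 ≤ (r e).2)
    (hcard : ∀ I, IsIdealStar I → (supGen r I).ncard = q) {I K : Set P}
    (hI : IsIdealStar I) (hK : IsIdealStar K) (h : setLE r (supGen r I) (supGen r K)) :
    supGen r (I ∩ K) = supGen r I := by
  obtain ⟨π, hπ, hπle⟩ := h
  refine (Set.eq_of_subset_of_ncard_le ?_ (by rw [hcard _ (hI.inter hK), hcard _ hI])).symm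
  intro f hf
  have hfK : (r f).1 ∈ K ∪ {⊥} := hK.mem_union_bot_of_le ((hπle f hf).fst_le hr) (hπ.mapsTo hf).1
  obtain ⟨hf₁, hf₂⟩ := hf
  constructor <;> simp only [Set.mem_union, Set.mem_inter_iff] at hf₁ hf₂ hfK ⊢ <;> tauto

variable (r) in
def supGenFamily : Set (Set E) := {S | ∃ I : Set P, IsIdealStar I ∧ S = supGen r I}

theorem isJoinIn_supGen_union [Finite P] [Finite E] (hr : ∀ e, (r e).1 ≤ (r e).2)
    (hcard : ∀ I, IsIdealStar I → (supGen r I).ncard = q) {I J : Set P}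
    (hI : IsIdealStar I) (hJ : IsIdealStar J) :
    IsJoinIn r (supGenFamily r) (supGen r I) (supGen r J) (supGen r (I ∪ J)) := by
  have hIJ := hI.union hJ
  refine ⟨⟨_, hIJ, rfl⟩, setLE_supGen_of_subset hr hcard hI hIJ Set.subset_union_left,
    setLE_supGen_of_subset hr hcard hJ hIJ Set.subset_union_right, ?_⟩
  rintro _ ⟨K, hK, rfl⟩ hIK hJK
  have hIK' := supGen_union_eq_of_setLE hr hcard hI hK hIK
  have hJK' := supGen_union_eq_of_setLE hr hcard hJ hK hJK
  have hIJK : supGen r (I ∪ J ∪ K) = supGen r K := by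
    rw [← hJK', show I ∪ J ∪ K = I ∪ K ∪ (J ∪ K) by
      rw [Set.union_union_union_comm, Set.union_self]]
    refine supGen_union_eq_of_setLE hr hcard (hI.union hK) (hJ.union hK) ?_
    rw [hIK', hJK']
    exact setLE_refl r _
  exact hIJK ▸ setLE_supGen_of_subset hr hcard hIJ (hIJ.union hK) Set.subset_union_left

theorem isMeetIn_supGen_inter [Finite P] [Finite E] (hr : ∀ e, (r e).1 ≤ (r e).2)
    (hcard : ∀ I, IsIdealStar I → (supGen r I).ncard = q) {I J : Set P}
    (hI : IsIdealStar I) (hJ : IsIdealStar J) :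
    IsMeetIn r (supGenFamily r) (supGen r I) (supGen r J) (supGen r (I ∩ J)) := by
  have hIJ := hI.inter hJ
  refine ⟨⟨_, hIJ, rfl⟩, setLE_supGen_of_subset hr hcard hIJ hI Set.inter_subset_left,
    setLE_supGen_of_subset hr hcard hIJ hJ Set.inter_subset_right, ?_⟩
  rintro _ ⟨K, hK, rfl⟩ hKI hKJ
  have hKI' := supGen_inter_eq_of_setLE hr hcard hK hI hKI
  have hKJ' := supGen_inter_eq_of_setLE hr hcard hK hJ hKJ
  have hKIJ : supGen r (K ∩ (I ∩ J)) = supGen r K := by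
    rw [← hKI', show K ∩ (I ∩ J) = K ∩ I ∩ (K ∩ J) by
      rw [Set.inter_inter_inter_comm, Set.inter_self]]
    refine supGen_inter_eq_of_setLE hr hcard (hK.inter hI) (hK.inter hJ) ?_
    rw [hKI', hKJ']
    exact setLE_refl r _
  exact hKIJ ▸ setLE_supGen_of_subset hr hcard (hK.inter hIJ) hIJ Set.inter_subset_right

end SupGen

theorem stmt_8_general {P E : Type*} [Fintype P] [PartialOrder P] [OrderBot P] [OrderTop P]
    [Fintype E]
    (r : E → P × P) (hr : ∀ e, (r e).1 < (r e).2)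
    (q : ℕ)
    (hcard : ∀ I : Set P, IsIdealStar I → (supGen r I).ncard = q)
    (𝒮 : Set (Set E)) (h𝒮 : 𝒮 = {S : Set E | ∃ I : Set P, IsIdealStar I ∧ S = supGen r I}) :
    -- `≤` is a partial order on `𝒮`:
    (∀ S ∈ 𝒮, setLE r S S) ∧
    (∀ S ∈ 𝒮, ∀ T ∈ 𝒮, setLE r S T → setLE r T S → S = T) ∧
    (∀ S ∈ 𝒮, ∀ T ∈ 𝒮, ∀ W ∈ 𝒮, setLE r S T → setLE r T W → setLE r S W) ∧
    -- every two elements of `𝒮` have a least upper bound and a greatest lower bound in `𝒮`: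
    (∀ S ∈ 𝒮, ∀ T ∈ 𝒮, ∃ J, IsJoinIn r 𝒮 S T J) ∧
    (∀ S ∈ 𝒮, ∀ T ∈ 𝒮, ∃ M, IsMeetIn r 𝒮 S T M) ∧
    -- meet distributes over join: `S ∧ (T ∨ W) = (S ∧ T) ∨ (S ∧ W)`:
    (∀ S ∈ 𝒮, ∀ T ∈ 𝒮, ∀ W ∈ 𝒮, ∀ J M₁ M₂ M₃ J' : Set E,
      IsJoinIn r 𝒮 T W J → IsMeetIn r 𝒮 S J M₁ →
      IsMeetIn r 𝒮 S T M₂ → IsMeetIn r 𝒮 S W M₃ →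
      IsJoinIn r 𝒮 M₂ M₃ J' → M₁ = J') := by
  obtain rfl : 𝒮 = supGenFamily r := h𝒮
  have hr' : ∀ e, (r e).1 ≤ (r e).2 := fun e => (hr e).le
  have join {I J : Set P} := isJoinIn_supGen_union (I := I) (J := J) hr' hcard
  have meet {I J : Set P} := isMeetIn_supGen_inter (I := I) (J := J) hr' hcard
  refine ⟨fun S _ => setLE_refl r S, fun S _ T _ => setLE_antisymm hr,
    fun S _ T _ W _ => setLE_trans hr', ?_, ?_, ?_⟩
  · rintro _ ⟨I, hI, rfl⟩ _ ⟨J, hJ, rfl⟩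
    exact ⟨_, join hI hJ⟩
  · rintro _ ⟨I, hI, rfl⟩ _ ⟨J, hJ, rfl⟩
    exact ⟨_, meet hI hJ⟩
  · rintro _ ⟨A, hA, rfl⟩ _ ⟨B, hB, rfl⟩ _ ⟨C, hC, rfl⟩ J M₁ M₂ M₃ J' hJ hM₁ hM₂ hM₃ hJ'
    obtain rfl := hJ.unique hr (join hB hC)
    obtain rfl := hM₁.unique hr (meet hA (hB.union hC))
    obtain rfl := hM₂.unique hr (meet hA hB)
    obtain rfl := hM₃.unique hr (meet hA hC)
    obtain rfl := hJ'.unique hr (join (hA.inter hB) (hA.inter hC))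
    rw [Set.inter_union_distrib_left]

/-- Suppose `e⁺ ≺ e⁻` strictly for every `e ∈ E` and there is a positive
integer `q` with `|sup_r(I)| = q` for every ideal `I` of `P*`. Then the relation `≤`
on `𝒮` is a partial order under which `𝒮` forms a distributive lattice: every two
elements of `𝒮` have a least upper bound and a greatest lower bound in `𝒮`, and meet
distributes over join. -/
theorem stmt_8 {P E : Type*} [Fintype P] [PartialOrder P] [OrderBot P] [OrderTop P]
    [Fintype E] (hbt : (⊥ : P) ≠ ⊤)
    (r : E → P × P) (hr : ∀ e, (r e).1 < (r e).2)
    (q : ℕ) (hq : 0 < q)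
    (hcard : ∀ I : Set P, IsIdealStar I → (supGen r I).ncard = q)
    (𝒮 : Set (Set E)) (h𝒮 : 𝒮 = {S : Set E | ∃ I : Set P, IsIdealStar I ∧ S = supGen r I}) :
    -- `≤` is a partial order on `𝒮`:
    (∀ S ∈ 𝒮, setLE r S S) ∧
    (∀ S ∈ 𝒮, ∀ T ∈ 𝒮, setLE r S T → setLE r T S → S = T) ∧
    (∀ S ∈ 𝒮, ∀ T ∈ 𝒮, ∀ W ∈ 𝒮, setLE r S T → setLE r T W → setLE r S W) ∧
    -- every two elements of `𝒮` have a least upper bound and a greatest lower bound in `𝒮`: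
    (∀ S ∈ 𝒮, ∀ T ∈ 𝒮, ∃ J, IsJoinIn r 𝒮 S T J) ∧
    (∀ S ∈ 𝒮, ∀ T ∈ 𝒮, ∃ M, IsMeetIn r 𝒮 S T M) ∧
    -- meet distributes over join: `S ∧ (T ∨ W) = (S ∧ T) ∨ (S ∧ W)`:
    (∀ S ∈ 𝒮, ∀ T ∈ 𝒮, ∀ W ∈ 𝒮, ∀ J M₁ M₂ M₃ J' : Set E,
      IsJoinIn r 𝒮 T W J → IsMeetIn r 𝒮 S J M₁ →
      IsMeetIn r 𝒮 S T M₂ → IsMeetIn r 𝒮 S W M₃ →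
      IsJoinIn r 𝒮 M₂ M₃ J' → M₁ = J') :=
  stmt_8_general r hr q hcard 𝒮 h𝒮
end

section
/- There exist a finite poset (P, ⪯) with a minimum element ⊥ and a maximum element ⊤ with ⊥ ≠ ⊤, and a map r : E → P × P, written r(e) = (e⁺, e⁻), with e⁺ ⪯ e⁻ for every e ∈ E, such that 𝒮 (with each tuple identified with its corresponding q-element subset of E) equals { sup_r(I) : I an ideal of P* }, where P* is P with ⊥ and ⊤ removed and sup_r(I) := { e ∈ E : e⁺ ∈ I ∪ {⊥} and e⁻ ∉ I ∪ {⊥} }. In particular, every member of 𝒮 is a subset of E of size exactly q. -/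
/-- An ideal (downward closed subset) of the poset `P*` obtained from `(P, le)` by
removing its minimum element `bot` and maximum element `top`. -/
def IsIdealRel {P : Type*} (le : P → P → Prop) (bot top : P) (I : Set P) : Prop :=
  (∀ x ∈ I, x ≠ bot ∧ x ≠ top) ∧ ∀ u v : P, v ∈ I → le u v → u ≠ bot → u ∈ I

/-!
The sublattice `𝒮` is a finite lattice `L` on which each coordinate `Y ↦ Y i` is a lattice
homomorphism to a chain, so for `e = (i, a)` the sets `{Y | a ≤ Y i}` and `{Y | a < Y i}` are
inf-closed upper sets whose complements are sup-closed. Take `P = WithTop L`, with `⊥` the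
bottom of `L`, and let `e⁺`, `e⁻` be the least elements of these two sets (`⊤` if empty).
For an ideal `I` of `P*` put `X = ⋁ (I ∪ {⊥})`; by primality the least element of such a set
lies in `I ∪ {⊥}` iff `X` lies in the set, so
`sup_r(I) = {(i, a) | a ≤ X i ∧ ¬ a < X i}` is the tuple `X`. Conversely, every `X ∈ 𝒮`
arises from the ideal `Iic X \ {⊥}`.
-/

open Set

section WithTopInf

variable {L : Type*} [SemilatticeInf L] [Finite L]

noncomputable def withTopInf (U : Set L) : WithTop L :=
  (toFinite U).toFinset.inf (↑)

lemma withTopInf_le_coe {U : Set L} {Y : L} (hY : Y ∈ U) : withTopInf U ≤ Y :=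
  Finset.inf_le ((toFinite U).mem_toFinset.2 hY)

lemma withTopInf_anti : Antitone (withTopInf : Set L → WithTop L) := fun _ _ h =>
  Finset.inf_mono (Finite.toFinset_mono h)

lemma withTopInf_empty : withTopInf (∅ : Set L) = ⊤ := by
  simp [withTopInf]

lemma InfClosed.exists_mem_withTopInf_eq {U : Set L} (hU : InfClosed U) (hne : U.Nonempty) :
    ∃ m ∈ U, withTopInf U = m :=
  ⟨_, hU.finsetInf'_mem ((toFinite U).toFinset_nonempty.2 hne)
    fun _ hY => (toFinite U).mem_toFinset.1 hY, (Finset.coe_inf' _ _).symm⟩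

lemma InfClosed.withTopInf_mem_iff {U : Set L} (hU : InfClosed U) {J : Set (WithTop L)}
    (hJ : IsLowerSet J) (htop : ⊤ ∉ J) :
    withTopInf U ∈ J ↔ ∃ Y ∈ U, (Y : WithTop L) ∈ J := by
  refine ⟨fun h => ?_, fun ⟨Y, hY, hYJ⟩ => hJ (withTopInf_le_coe hY) hYJ⟩
  rcases U.eq_empty_or_nonempty with rfl | hne
  · exact absurd (withTopInf_empty (L := L) ▸ h) htop
  · obtain ⟨m, hm, hmeq⟩ := hU.exists_mem_withTopInf_eq hne
    exact ⟨m, hm, hmeq ▸ h⟩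

lemma withTopInf_le_coe_iff {U : Set L} (hU : IsUpperSet U) (hUinf : InfClosed U) {X : L} :
    withTopInf U ≤ X ↔ X ∈ U := by
  have := hUinf.withTopInf_mem_iff (isLowerSet_Iic (X : WithTop L)) (by simp)
  simp only [mem_Iic, WithTop.coe_le_coe] at this
  exact this.trans ⟨fun ⟨_, hY, hYX⟩ => hU hYX hY, fun h => ⟨X, h, le_rfl⟩⟩

end WithTopInf

lemma IsUpperSet.finsetSup'_mem_iff {L : Type*} [SemilatticeSup L] {U : Set L}
    (hU : IsUpperSet U) (hUc : SupClosed Uᶜ) {D : Finset L} (hD : D.Nonempty) :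
    D.sup' hD id ∈ U ↔ ∃ Y ∈ D, Y ∈ U := by
  refine ⟨fun h => ?_, fun ⟨Y, hY, hYU⟩ => hU (Finset.le_sup' id hY) hYU⟩
  by_contra! hD'
  exact hUc.finsetSup'_mem hD hD' h

lemma withTopInf_mem_iff_finsetSup'_mem {L : Type*} [Lattice L] [Finite L] {U : Set L}
    (hU : IsUpperSet U) (hUinf : InfClosed U) (hUc : SupClosed Uᶜ) {J : Set (WithTop L)}
    (hJ : IsLowerSet J) (htop : ⊤ ∉ J) {D : Finset L}
    (hDJ : ∀ Y, Y ∈ D ↔ (Y : WithTop L) ∈ J) (hD : D.Nonempty) :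
    withTopInf U ∈ J ↔ D.sup' hD id ∈ U := by
  rw [hUinf.withTopInf_mem_iff hJ htop, hU.finsetSup'_mem_iff hUc hD]
  simp only [hDJ, and_comm]

section IsIdealRel

variable {P : Type*} [PartialOrder P] [BoundedOrder P] {I : Set P}

lemma IsIdealRel.isLowerSet_union_bot (hI : IsIdealRel (· ≤ ·) ⊥ ⊤ I) :
    IsLowerSet (I ∪ {⊥}) := by
  rintro v u huv (hv | rfl)
  · by_cases hu : u = ⊥
    · exact Or.inr hu
    · exact Or.inl (hI.2 u v hv huv hu)
  · exact Or.inr (le_bot_iff.1 huv)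

lemma IsIdealRel.top_notMem_union_bot [Nontrivial P] (hI : IsIdealRel (· ≤ ·) ⊥ ⊤ I) :
    ⊤ ∉ I ∪ {⊥} := by
  rintro (h | h)
  · exact (hI.1 ⊤ h).2 rfl
  · exact top_ne_bot h

lemma isIdealRel_Iic_diff_bot {x : P} (hx : x ≠ ⊤) :
    IsIdealRel (· ≤ ·) ⊥ ⊤ (Iic x \ {⊥}) :=
  ⟨fun _ ⟨hyx, hy⟩ => ⟨hy, ne_top_of_le_ne_top hx hyx⟩,
    fun _ _ ⟨hvx, _⟩ huv hu => ⟨huv.trans hvx, hu⟩⟩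

end IsIdealRel

lemma mem_range_sigma_mk_iff {ι : Type*} {E : ι → Type*} {X : ∀ i, E i} {e : Σ i, E i} :
    e ∈ range (fun i => (⟨i, X i⟩ : Σ i, E i)) ↔ X e.1 = e.2 := by
  constructor
  · rintro ⟨i, rfl⟩
    rfl
  · obtain ⟨i, a⟩ := e
    rintro (rfl : X i = a)
    exact ⟨i, rfl⟩

section Representation

variable {ι L : Type*} [Lattice L] {E : ι → Type*} [∀ i, LinearOrder (E i)]
  {f : LatticeHom L (∀ i, E i)}

lemma infClosed_setOf_apply_mem (i : ι) (V : Set (E i)) : InfClosed {Y | f Y i ∈ V} :=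
  (LinearOrder.infClosed V).preimage ((Pi.evalLatticeHom i).comp f)

lemma supClosed_compl_setOf_apply_mem (i : ι) (V : Set (E i)) : SupClosed {Y | f Y i ∈ V}ᶜ :=
  (LinearOrder.supClosed Vᶜ).preimage ((Pi.evalLatticeHom i).comp f)

lemma IsUpperSet.setOf_apply_mem {i : ι} {V : Set (E i)} (hV : IsUpperSet V) :
    IsUpperSet {Y | f Y i ∈ V} :=
  hV.preimage fun _ _ h => OrderHomClass.mono f h i

variable [Finite L] (f) in
noncomputable def endpoints (e : Σ i, E i) : WithTop L × WithTop L :=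
  (withTopInf {Y | e.2 ≤ f Y e.1}, withTopInf {Y | e.2 < f Y e.1})

variable [Finite L]

lemma endpoints_fst_le_snd (e : Σ i, E i) : (endpoints f e).1 ≤ (endpoints f e).2 :=
  withTopInf_anti fun _ (h : e.2 < _) => h.le

lemma setOf_endpoints_eq_range {J : Set (WithTop L)} {X : L}
    (hJ : ∀ i (V : Set (E i)), IsUpperSet V →
      (withTopInf {Y | f Y i ∈ V} ∈ J ↔ f X i ∈ V)) :
    {e | (endpoints f e).1 ∈ J ∧ (endpoints f e).2 ∉ J} =
      range fun i => (⟨i, f X i⟩ : Σ i, E i) := by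
  ext ⟨i, a⟩
  rw [mem_range_sigma_mk_iff]
  change withTopInf {Y | f Y i ∈ Ici a} ∈ J ∧ withTopInf {Y | f Y i ∈ Ioi a} ∉ J ↔
    f X i = a
  rw [hJ i _ (isUpperSet_Ici a), hJ i _ (isUpperSet_Ioi a), mem_Ici, mem_Ioi, not_lt,
    le_antisymm_iff, and_comm]

variable [OrderBot L]

theorem exists_isIdealRel_range_sigma_mk_eq (X : L) :
    ∃ I : Set (WithTop L), IsIdealRel (· ≤ ·) ⊥ ⊤ I ∧
      range (fun i => (⟨i, f X i⟩ : Σ i, E i)) =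
        {e | (endpoints f e).1 ∈ I ∪ {⊥} ∧ (endpoints f e).2 ∉ I ∪ {⊥}} := by
  refine ⟨Iic (X : WithTop L) \ {⊥}, isIdealRel_Iic_diff_bot WithTop.coe_ne_top, ?_⟩
  rw [sdiff_union_self, union_eq_self_of_subset_right (by simp)]
  refine (setOf_endpoints_eq_range fun i V hV => ?_).symm
  exact withTopInf_le_coe_iff hV.setOf_apply_mem (infClosed_setOf_apply_mem i V)

theorem IsIdealRel.exists_setOf_endpoints_eq_range {I : Set (WithTop L)}
    (hI : IsIdealRel (· ≤ ·) ⊥ ⊤ I) :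
    ∃ X : L, {e | (endpoints f e).1 ∈ I ∪ {⊥} ∧ (endpoints f e).2 ∉ I ∪ {⊥}} =
      range (fun i => (⟨i, f X i⟩ : Σ i, E i)) := by
  set D := (toFinite {Y : L | (Y : WithTop L) ∈ I ∪ {⊥}}).toFinset
  have hD : D.Nonempty := ⟨⊥, by simp [D]⟩
  refine ⟨D.sup' hD id, setOf_endpoints_eq_range fun i V hV => ?_⟩
  exact withTopInf_mem_iff_finsetSup'_mem hV.setOf_apply_mem (infClosed_setOf_apply_mem i V)
    (supClosed_compl_setOf_apply_mem i V) hI.isLowerSet_union_bot hI.top_notMem_union_bot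
    (fun Y => by simp [D]) hD

end Representation

theorem stmt_15_general (q : ℕ) (Ei : Fin q → Type)
    [∀ i, Fintype (Ei i)] [∀ i, LinearOrder (Ei i)]
    (𝒮 : Set (∀ i, Ei i)) (hne : 𝒮.Nonempty)
    (hmin : ∀ X ∈ 𝒮, ∀ Y ∈ 𝒮, (fun i => min (X i) (Y i)) ∈ 𝒮)
    (hmax : ∀ X ∈ 𝒮, ∀ Y ∈ 𝒮, (fun i => max (X i) (Y i)) ∈ 𝒮) :
    (∀ X ∈ 𝒮, (Set.range fun i => (⟨i, X i⟩ : Σ i, Ei i)).ncard = q) ∧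
    ∃ (P : Type) (_ : Fintype P) (le : P → P → Prop) (_ : IsPartialOrder P le)
      (bot top : P) (r : (Σ i, Ei i) → P × P),
      (∀ x : P, le bot x) ∧ (∀ x : P, le x top) ∧ bot ≠ top ∧
      (∀ e : Σ i, Ei i, le (r e).1 (r e).2) ∧
      {S : Set (Σ i, Ei i) | ∃ X ∈ 𝒮, S = Set.range fun i => (⟨i, X i⟩ : Σ i, Ei i)} =
        {S : Set (Σ i, Ei i) | ∃ I : Set P, IsIdealRel le bot top I ∧
          S = {e | (r e).1 ∈ I ∪ {bot} ∧ (r e).2 ∉ I ∪ {bot}}} := by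
  refine ⟨fun X _ => by
    rw [ncard_range_of_injective fun _ _ h => congrArg Sigma.fst h, Nat.card_eq_fintype_card,
      Fintype.card_fin], ?_⟩
  let L : Sublattice (∀ i, Ei i) := { carrier := 𝒮, supClosed' := hmax, infClosed' := hmin }
  have : Nonempty L := hne.to_subtype
  let : Fintype L := Fintype.ofFinite L
  let : OrderBot L := Fintype.toOrderBot L
  refine ⟨WithTop L, inferInstance, (· ≤ ·), inferInstance, ⊥, ⊤, endpoints L.subtype,
    fun _ => bot_le, fun _ => le_top, bot_ne_top, endpoints_fst_le_snd, ?_⟩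
  ext S
  constructor
  · rintro ⟨X, hX, rfl⟩
    exact exists_isIdealRel_range_sigma_mk_eq (f := L.subtype) ⟨X, hX⟩
  · rintro ⟨I, hI, rfl⟩
    obtain ⟨X, hX⟩ := hI.exists_setOf_endpoints_eq_range (f := L.subtype)
    exact ⟨X, X.2, hX⟩

/-- Let `𝒮` be a nonempty sublattice of a product of `q` finite
nonempty total orders. Then every member of `𝒮` (identified with a `q`-element subset of
the disjoint union `E = E₁ ⊔ ⋯ ⊔ E_q`) has size exactly `q`, and there exist a finite
poset `(P, ⪯)` with minimum `⊥` and maximum `⊤`, `⊥ ≠ ⊤`, and a map `r : E → P × P`,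
`r e = (e⁺, e⁻)` with `e⁺ ⪯ e⁻`, such that `𝒮` equals
`{ sup_r(I) : I an ideal of P* }`. -/
theorem stmt_15 (q : ℕ) (hq : 0 < q) (Ei : Fin q → Type)
    [∀ i, Fintype (Ei i)] [∀ i, Nonempty (Ei i)] [∀ i, LinearOrder (Ei i)]
    (𝒮 : Set (∀ i, Ei i)) (hne : 𝒮.Nonempty)
    (hmin : ∀ X ∈ 𝒮, ∀ Y ∈ 𝒮, (fun i => min (X i) (Y i)) ∈ 𝒮)
    (hmax : ∀ X ∈ 𝒮, ∀ Y ∈ 𝒮, (fun i => max (X i) (Y i)) ∈ 𝒮) :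
    (∀ X ∈ 𝒮, (Set.range fun i => (⟨i, X i⟩ : Σ i, Ei i)).ncard = q) ∧
    ∃ (P : Type) (_ : Fintype P) (le : P → P → Prop) (_ : IsPartialOrder P le)
      (bot top : P) (r : (Σ i, Ei i) → P × P),
      (∀ x : P, le bot x) ∧ (∀ x : P, le x top) ∧ bot ≠ top ∧
      (∀ e : Σ i, Ei i, le (r e).1 (r e).2) ∧
      {S : Set (Σ i, Ei i) | ∃ X ∈ 𝒮, S = Set.range fun i => (⟨i, X i⟩ : Σ i, Ei i)} =
        {S : Set (Σ i, Ei i) | ∃ I : Set P, IsIdealRel le bot top I ∧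
          S = {e | (r e).1 ∈ I ∪ {bot} ∧ (r e).2 ∉ I ∪ {bot}}} :=
  stmt_15_general q Ei 𝒮 hne hmin hmax
end
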